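/- arXiv:2503.20066 — 4 statements merged into one kernel-verified Lean document; each statement's English description precedes it below -/
import Mathlib

section
/- Consider the ellipsoid E = { y ∈ ℝ³ : (y−c)^T R Q₀⁻² R^T (y−c) ≤ 1 } with c ∈ ℝ³, R ∈ SO(3), Q₀ = diag(r), r ∈ ℝ³₊. For a ray from p in unit direction v, set p' = R^T(p−c), v' = R^T v, w' = p'×v', Q₁ = det(Q₀)·Q₀⁻¹, and i(p,v) = v'^T Q₁² v' − w'^T Q₀² w'. Then the line {p + d v : d ∈ ℝ} intersects ∂E if and only if i(p,v) ≥ 0, and when i(p,v) ≥ 0 the smaller root of the intersection equation is d = −( det(Q₀)·√(i(p,v)) + p'^T Q₁² v' ) / ( v'^T Q₁² v' ). -/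
open Matrix

/-!
In the principal-axes frame the ellipsoid is the unit ball seen through `Q₀⁻¹`: with
`u = Q₀⁻¹ p'` and `z = Q₀⁻¹ v'`, the point `p + d v` lies on `∂E` iff `|u + d z|² = 1`, a quadratic
in `d` whose half-discriminant is `Δ = (u⋅z)² - |z|² (|u|² - 1)`. Since `Q₁ = det(Q₀) Q₀⁻¹`,
`v'ᵀ Q₁² v' = det(Q₀)² |z|²`, and by the cofactor identity `Q₀ (Q₀u × Q₀z) = det(Q₀) (u × z)`
together with Lagrange's identity, `w'ᵀ Q₀² w' = det(Q₀)² (|u|²|z|² - (u⋅z)²)`.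
Hence `i(p,v) = det(Q₀)² Δ`, and the formula for `d` is the smaller root `(-(u⋅z) - √Δ) / |z|²`.
-/

theorem quadratic_eq_zero_iff_sq_eq {K : Type*} [CommRing K] [IsDomain K] {a b e d : K}
    (ha : a ≠ 0) :
    a * d ^ 2 + 2 * b * d + e = 0 ↔ (a * d + b) ^ 2 = b ^ 2 - a * e := by
  constructor
  · intro h
    linear_combination a * h
  · intro h
    apply mul_left_cancel₀ ha
    linear_combination h

theorem exists_quadratic_eq_zero_iff {a b e : ℝ} (ha : 0 < a) :
    (∃ d, a * d ^ 2 + 2 * b * d + e = 0) ↔ 0 ≤ b ^ 2 - a * e := by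
  simp only [quadratic_eq_zero_iff_sq_eq ha.ne']
  constructor
  · rintro ⟨d, hd⟩
    exact hd ▸ sq_nonneg _
  · intro hΔ
    refine ⟨(-b + √(b ^ 2 - a * e)) / a, ?_⟩
    rw [mul_div_cancel₀ _ ha.ne', neg_add_cancel_comm, Real.sq_sqrt hΔ]

theorem isLeast_quadratic_roots {a b e : ℝ} (ha : 0 < a) (hΔ : 0 ≤ b ^ 2 - a * e) :
    IsLeast {d | a * d ^ 2 + 2 * b * d + e = 0} ((-b - √(b ^ 2 - a * e)) / a) := by
  simp only [IsLeast, lowerBounds, Set.mem_ofPred_eq, quadratic_eq_zero_iff_sq_eq ha.ne']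
  refine ⟨?_, fun d hd => ?_⟩
  · rw [mul_div_cancel₀ _ ha.ne', show ∀ s, -b - s + b = -s by intro; ring, neg_sq,
      Real.sq_sqrt hΔ]
  · have habs : |a * d + b| = √(b ^ 2 - a * e) := by rw [← Real.sqrt_sq_eq_abs, hd]
    have hge : -√(b ^ 2 - a * e) ≤ a * d + b := habs ▸ neg_abs_le _
    rw [div_le_iff₀ ha]
    linarith

theorem frontier_setOf_sub_le_one {E : Type*} [AddCommGroup E] [Module ℝ E]
    [TopologicalSpace E] [IsTopologicalAddGroup E] [ContinuousSMul ℝ E] {f : E → ℝ}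
    (hf : Continuous f)
    (hsmul : ∀ (t : ℝ) (x : E), f (t • x) = t ^ 2 * f x) (c : E) :
    frontier {y | f (y - c) ≤ 1} = {y | f (y - c) = 1} := by
  refine (frontier_le_subset_eq (hf.comp (continuous_sub_right c)) continuous_const).antisymm
    fun y (hy : f (y - c) = 1) => ?_
  rw [frontier_eq_closure_inter_closure]
  refine ⟨subset_closure hy.le, ?_⟩
  -- `c + t • (y - c)` lies outside the set for `t > 1` and tends to `y` as `t → 1`.
  have hlim :
      Filter.Tendsto (fun t : ℝ => c + t • (y - c)) (nhdsWithin 1 (Set.Ioi 1)) (nhds y) :=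
    ((by fun_prop : Continuous fun t : ℝ => c + t • (y - c)).tendsto' 1 y (by simp)).mono_left
      nhdsWithin_le_nhds
  refine mem_closure_of_tendsto hlim (eventually_nhdsWithin_of_forall fun t (ht : 1 < t) => ?_)
  show ¬ f (c + t • (y - c) - c) ≤ 1
  rw [add_sub_cancel_left, hsmul, hy, mul_one, not_le]
  nlinarith

theorem mem_frontier_setOf_mulVec_sub_dotProduct_le_one {m n : Type*} [Fintype m]
    [Fintype n] (T : Matrix m n ℝ) (c y : n → ℝ) :
    y ∈ frontier {y | T *ᵥ (y - c) ⬝ᵥ T *ᵥ (y - c) ≤ 1} ↔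
      T *ᵥ (y - c) ⬝ᵥ T *ᵥ (y - c) = 1 := by
  rw [frontier_setOf_sub_le_one (f := fun x => T *ᵥ x ⬝ᵥ T *ᵥ x) (by fun_prop) _ c]
  · rfl
  · intro t x
    simp only [mulVec_smul, smul_dotProduct, dotProduct_smul, smul_eq_mul]
    ring

theorem dotProduct_add_smul_self_eq_one_iff {n K : Type*} [Fintype n] [CommRing K]
    (u z : n → K) (d : K) :
    (u + d • z) ⬝ᵥ (u + d • z) = 1 ↔ z ⬝ᵥ z * d ^ 2 + 2 * (u ⬝ᵥ z) * d + (u ⬝ᵥ u - 1) = 0 := by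
  simp only [add_dotProduct, dotProduct_add, smul_dotProduct, dotProduct_smul, smul_eq_mul,
    dotProduct_comm z u]
  constructor <;> intro h <;> linear_combination h

theorem exists_dotProduct_add_smul_self_eq_one_iff {n : Type*} [Fintype n] {u z : n → ℝ}
    (hz : z ≠ 0) :
    (∃ d : ℝ, (u + d • z) ⬝ᵥ (u + d • z) = 1) ↔ 0 ≤ (u ⬝ᵥ z) ^ 2 - z ⬝ᵥ z * (u ⬝ᵥ u - 1) := by
  simpa only [dotProduct_add_smul_self_eq_one_iff] using
    exists_quadratic_eq_zero_iff (by simpa using dotProduct_self_star_pos_iff.2 hz)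

theorem isLeast_dotProduct_add_smul_self_eq_one {n : Type*} [Fintype n] {u z : n → ℝ}
    (hz : z ≠ 0) (hΔ : 0 ≤ (u ⬝ᵥ z) ^ 2 - z ⬝ᵥ z * (u ⬝ᵥ u - 1)) :
    IsLeast {d : ℝ | (u + d • z) ⬝ᵥ (u + d • z) = 1}
      ((-(u ⬝ᵥ z) - √((u ⬝ᵥ z) ^ 2 - z ⬝ᵥ z * (u ⬝ᵥ u - 1))) / z ⬝ᵥ z) := by
  simpa only [dotProduct_add_smul_self_eq_one_iff] using
    isLeast_quadratic_roots (by simpa using dotProduct_self_star_pos_iff.2 hz) hΔ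

namespace Matrix

theorem dotProduct_transpose_mul_mulVec {m n R : Type*} [Fintype m] [Fintype n]
    [CommSemiring R] (A : Matrix m n R) (x y : n → R) :
    x ⬝ᵥ ((Aᵀ * A) *ᵥ y) = (A *ᵥ x) ⬝ᵥ (A *ᵥ y) := by
  rw [← mulVec_mulVec, dotProduct_mulVec, vecMul_transpose]

theorem IsSymm.dotProduct_sq_mulVec {n R : Type*} [Fintype n] [DecidableEq n] [CommSemiring R]
    {M : Matrix n n R} (hM : M.IsSymm) (x y : n → R) :
    x ⬝ᵥ (M ^ 2 *ᵥ y) = (M *ᵥ x) ⬝ᵥ (M *ᵥ y) := by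
  rw [← dotProduct_transpose_mul_mulVec, hM.eq, sq]

theorem IsSymm.dotProduct_det_smul_inv_sq_mulVec {n R : Type*} [Fintype n] [DecidableEq n]
    [CommRing R] {S : Matrix n n R} (hS : S.IsSymm) (x y : n → R) :
    x ⬝ᵥ ((S.det • S⁻¹) ^ 2 *ᵥ y) = S.det ^ 2 * ((S⁻¹ *ᵥ x) ⬝ᵥ (S⁻¹ *ᵥ y)) := by
  rw [(hS.inv.smul S.det).dotProduct_sq_mulVec, smul_mulVec, smul_mulVec, smul_dotProduct,
    dotProduct_smul, smul_eq_mul, smul_eq_mul, ← mul_assoc, sq]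

/-- The cofactor identity `(A x) × (A y) = adj(A)ᵀ (x × y)`, in the form free of inverses. -/
theorem transpose_mulVec_cross_mulVec {R : Type*} [CommRing R] (A : Matrix (Fin 3) (Fin 3) R)
    (x y : Fin 3 → R) : Aᵀ *ᵥ ((A *ᵥ x) ⨯₃ (A *ᵥ y)) = A.det • (x ⨯₃ y) := by
  suffices h : ∀ z, z ⬝ᵥ (Aᵀ *ᵥ ((A *ᵥ x) ⨯₃ (A *ᵥ y))) = z ⬝ᵥ (A.det • (x ⨯₃ y)) by
    funext i
    simpa only [single_one_dotProduct] using h (Pi.single i 1)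
  intro z
  have hrows : ![A *ᵥ z, A *ᵥ x, A *ᵥ y] = of ![z, x, y] * Aᵀ := by
    ext i j
    fin_cases i <;> simp [mul_apply, mulVec, dotProduct, mul_comm]
  rw [dotProduct_mulVec, ← mulVec_transpose, transpose_transpose, triple_product_eq_det, hrows,
    det_mul, det_transpose, dotProduct_smul, triple_product_eq_det, smul_eq_mul, mul_comm]
  rfl

theorem IsSymm.cross_dotProduct_sq_mulVec_cross {R : Type*} [CommRing R]
    {S : Matrix (Fin 3) (Fin 3) R} (hS : S.IsSymm) (hdet : IsUnit S.det) (x y : Fin 3 → R) :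
    (x ⨯₃ y) ⬝ᵥ (S ^ 2 *ᵥ (x ⨯₃ y)) = S.det ^ 2 * ((S⁻¹ *ᵥ x) ⬝ᵥ (S⁻¹ *ᵥ x) *
      ((S⁻¹ *ᵥ y) ⬝ᵥ (S⁻¹ *ᵥ y)) - ((S⁻¹ *ᵥ x) ⬝ᵥ (S⁻¹ *ᵥ y)) ^ 2) := by
  have hS' : ∀ w, S *ᵥ (S⁻¹ *ᵥ w) = w := fun w => by
    rw [mulVec_mulVec, mul_nonsing_inv _ hdet, one_mulVec]
  have hcross : S *ᵥ (x ⨯₃ y) = S.det • ((S⁻¹ *ᵥ x) ⨯₃ (S⁻¹ *ᵥ y)) := by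
    simpa only [hS', hS.eq] using transpose_mulVec_cross_mulVec S (S⁻¹ *ᵥ x) (S⁻¹ *ᵥ y)
  rw [hS.dotProduct_sq_mulVec, hcross, smul_dotProduct, dotProduct_smul, cross_dot_cross,
    dotProduct_comm (S⁻¹ *ᵥ y) (S⁻¹ *ᵥ x), smul_eq_mul, smul_eq_mul]
  ring

theorem IsSymm.dotProduct_det_smul_inv_sq_mulVec_sub_cross {R : Type*} [CommRing R]
    {S : Matrix (Fin 3) (Fin 3) R} (hS : S.IsSymm) (hdet : IsUnit S.det) (p v : Fin 3 → R) :
    v ⬝ᵥ ((S.det • S⁻¹) ^ 2 *ᵥ v) - (p ⨯₃ v) ⬝ᵥ (S ^ 2 *ᵥ (p ⨯₃ v)) =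
      S.det ^ 2 * (((S⁻¹ *ᵥ p) ⬝ᵥ (S⁻¹ *ᵥ v)) ^ 2 -
        (S⁻¹ *ᵥ v) ⬝ᵥ (S⁻¹ *ᵥ v) * ((S⁻¹ *ᵥ p) ⬝ᵥ (S⁻¹ *ᵥ p) - 1)) := by
  rw [hS.dotProduct_det_smul_inv_sq_mulVec, hS.cross_dotProduct_sq_mulVec_cross hdet]
  ring

end Matrix

theorem ellipsoid_line_intersection_general
    (c p v : Fin 3 → ℝ) (R : Matrix (Fin 3) (Fin 3) ℝ)
    (hR : R ∈ Matrix.orthogonalGroup (Fin 3) ℝ)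
    (r : Fin 3 → ℝ) (hr : ∀ i, 0 < r i)
    (hv : v ⬝ᵥ v = 1) :
    let Q₀ : Matrix (Fin 3) (Fin 3) ℝ := Matrix.diagonal r
    let Q₁ : Matrix (Fin 3) (Fin 3) ℝ := Q₀.det • Q₀⁻¹
    let E : Set (Fin 3 → ℝ) :=
      {y | (y - c) ⬝ᵥ ((R * Q₀⁻¹ * Q₀⁻¹ * Rᵀ) *ᵥ (y - c)) ≤ 1}
    let p' : Fin 3 → ℝ := Rᵀ *ᵥ (p - c)
    let v' : Fin 3 → ℝ := Rᵀ *ᵥ v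
    let w' : Fin 3 → ℝ := p' ⨯₃ v'
    let ind : ℝ := v' ⬝ᵥ ((Q₁ ^ 2) *ᵥ v') - w' ⬝ᵥ ((Q₀ ^ 2) *ᵥ w')
    ((∃ d : ℝ, p + d • v ∈ frontier E) ↔ 0 ≤ ind) ∧
    (0 ≤ ind →
      let dm : ℝ := -(Q₀.det * Real.sqrt ind + p' ⬝ᵥ ((Q₁ ^ 2) *ᵥ v')) /
        (v' ⬝ᵥ ((Q₁ ^ 2) *ᵥ v'))
      p + dm • v ∈ frontier E ∧ ∀ d : ℝ, p + d • v ∈ frontier E → dm ≤ d) := by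
  intro Q₀ Q₁ E p' v' w' ind
  have hQ₀ : Q₀.IsSymm := isSymm_diagonal r
  have hdet : 0 < Q₀.det := by
    simpa only [Q₀, det_diagonal] using Finset.prod_pos fun i _ => hr i
  set u := Q₀⁻¹ *ᵥ p'
  set z := Q₀⁻¹ *ᵥ v'
  set Δ := (u ⬝ᵥ z) ^ 2 - z ⬝ᵥ z * (u ⬝ᵥ u - 1)
  have hE : E = {y | (Q₀⁻¹ * Rᵀ) *ᵥ (y - c) ⬝ᵥ (Q₀⁻¹ * Rᵀ) *ᵥ (y - c) ≤ 1} := by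
    simp only [E, ← dotProduct_transpose_mul_mulVec, transpose_mul, transpose_transpose,
      hQ₀.inv.eq, Matrix.mul_assoc]
  have hline (d : ℝ) : p + d • v ∈ frontier E ↔ (u + d • z) ⬝ᵥ (u + d • z) = 1 := by
    rw [hE, mem_frontier_setOf_mulVec_sub_dotProduct_le_one, add_sub_right_comm,
      ← mulVec_mulVec, mulVec_add, mulVec_add, mulVec_smul, mulVec_smul]
  have hz : z ≠ 0 := by
    intro hz0
    have hvz : v = (R * Q₀) *ᵥ z := by
      rw [mulVec_mulVec, mulVec_mulVec, mul_nonsing_inv_cancel_right _ _ hdet.ne'.isUnit,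
        (mem_orthogonalGroup_iff _ _).1 hR, one_mulVec]
    simp [hvz, hz0] at hv
  have hind : ind = Q₀.det ^ 2 * Δ :=
    hQ₀.dotProduct_det_smul_inv_sq_mulVec_sub_cross hdet.ne'.isUnit p' v'
  have hind_nonneg : 0 ≤ ind ↔ 0 ≤ Δ := by
    rw [hind, mul_nonneg_iff_of_pos_left (pow_pos hdet 2)]
  refine ⟨by simpa only [hline, hind_nonneg] using
    exists_dotProduct_add_smul_self_eq_one_iff hz, fun h => ?_⟩
  intro dm
  have hdm : dm = (-(u ⬝ᵥ z) - √Δ) / z ⬝ᵥ z := by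
    simp only [dm, Q₁, hQ₀.dotProduct_det_smul_inv_sq_mulVec]
    rw [hind, Real.sqrt_mul (sq_nonneg _), Real.sqrt_sq hdet.le]
    field_simp
    ring
  obtain ⟨hroot, hleast⟩ := hdm ▸ isLeast_dotProduct_add_smul_self_eq_one hz (hind_nonneg.1 h)
  exact ⟨(hline dm).2 hroot, fun d hd => hleast ((hline d).1 hd)⟩

/-- Line–ellipsoid intersection: the line `{p + d • v}` meets the boundary of the ellipsoid
`E = {y | (y-c)ᵀ R Q₀⁻² Rᵀ (y-c) ≤ 1}` iff the intersection indicator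
`i(p,v) = v'ᵀ Q₁² v' - w'ᵀ Q₀² w'` is nonnegative, and in that case the smaller root is
`d = -(det Q₀ √i + p'ᵀ Q₁² v') / (v'ᵀ Q₁² v')`. -/
theorem ellipsoid_line_intersection
    (c p v : Fin 3 → ℝ) (R : Matrix (Fin 3) (Fin 3) ℝ)
    (hR : R ∈ Matrix.orthogonalGroup (Fin 3) ℝ) (hRdet : R.det = 1)
    (r : Fin 3 → ℝ) (hr : ∀ i, 0 < r i)
    (hv : v ⬝ᵥ v = 1) :
    let Q₀ : Matrix (Fin 3) (Fin 3) ℝ := Matrix.diagonal r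
    let Q₁ : Matrix (Fin 3) (Fin 3) ℝ := Q₀.det • Q₀⁻¹
    let E : Set (Fin 3 → ℝ) :=
      {y | (y - c) ⬝ᵥ ((R * Q₀⁻¹ * Q₀⁻¹ * Rᵀ) *ᵥ (y - c)) ≤ 1}
    let p' : Fin 3 → ℝ := Rᵀ *ᵥ (p - c)
    let v' : Fin 3 → ℝ := Rᵀ *ᵥ v
    let w' : Fin 3 → ℝ := p' ⨯₃ v'
    let ind : ℝ := v' ⬝ᵥ ((Q₁ ^ 2) *ᵥ v') - w' ⬝ᵥ ((Q₀ ^ 2) *ᵥ w')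
    ((∃ d : ℝ, p + d • v ∈ frontier E) ↔ 0 ≤ ind) ∧
    (0 ≤ ind →
      let dm : ℝ := -(Q₀.det * Real.sqrt ind + p' ⬝ᵥ ((Q₁ ^ 2) *ᵥ v')) /
        (v' ⬝ᵥ ((Q₁ ^ 2) *ᵥ v'))
      p + dm • v ∈ frontier E ∧ ∀ d : ℝ, p + d • v ∈ frontier E → dm ≤ d) :=
  ellipsoid_line_intersection_general c p v R hR r hr hv
end

section
/- With notation as in the ellipsoid SDDF setup (p' = R^T(p−c), v' = R^T v, w' = p'×v', Q₀ = diag(r), Q₁ = det(Q₀) Q₀⁻¹), the discriminant of the quadratic ½(v'^T Q₁² v') d² + (p'^T Q₁² v') d + ½(p'^T Q₁² p' − det(Q₀)²) = 0 satisfies (p'^T Q₁² v')² − (v'^T Q₁² v')(p'^T Q₁² p' − det(Q₀)²) = ( v'^T Q₁² v' − w'^T Q₀² w' ) · det(Q₀)². -/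
open Matrix
open scoped Matrix

/-!
Away from the degenerate case `det Q₀ = 0` (where `Q₁ = 0` and both sides vanish), `Q₁` is the
adjugate of `Q₀`, so `A := Q₁²` is the adjugate of `Q₀²` and `adj A = (det Q₀)² Q₀²`. The identity
is then the weighted Lagrange identity `(p'ᵀAp')(v'ᵀAv') - (p'ᵀAv')² = w'ᵀ (adj A) w'` for the
symmetric matrix `A`, i.e. Cauchy–Binet for the Gram determinant of `p', v'` in the form `A`.
-/

namespace Matrix

theorem det_smul_inv_eq_adjugate {n α : Type*} [Fintype n] [DecidableEq n] [CommRing α]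
    (A : Matrix n n α) (h : IsUnit A.det) : A.det • A⁻¹ = A.adjugate := by
  rw [inv_def, smul_smul, Ring.mul_inverse_cancel _ h, one_smul]

theorem IsSymm.dotProduct_mulVec_comm {n R : Type*} [Fintype n] [CommSemiring R]
    {A : Matrix n n R} (hA : A.IsSymm) (p v : n → R) :
    p ⬝ᵥ (A *ᵥ v) = v ⬝ᵥ (A *ᵥ p) := by
  rw [dotProduct_mulVec, ← mulVec_transpose, hA.eq, dotProduct_comm]

theorem cross_dotProduct_adjugate_mulVec_cross {R : Type*} [CommRing R]
    (A : Matrix (Fin 3) (Fin 3) R) (p v : Fin 3 → R) :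
    (p ⨯₃ v) ⬝ᵥ (A.adjugate *ᵥ (p ⨯₃ v)) =
      (p ⬝ᵥ (A *ᵥ p)) * (v ⬝ᵥ (A *ᵥ v)) - (p ⬝ᵥ (A *ᵥ v)) * (v ⬝ᵥ (A *ᵥ p)) := by
  simp only [adjugate_fin_three, cross_apply, dotProduct, mulVec, Fin.sum_univ_three,
    of_apply, cons_val_zero, cons_val_one, cons_val_two, head_cons, tail_cons]
  ring

theorem IsSymm.sq_dotProduct_mulVec_sub_eq {R : Type*} [CommRing R]
    {A : Matrix (Fin 3) (Fin 3) R} (hA : A.IsSymm) (p v : Fin 3 → R) (c : R) :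
    (p ⬝ᵥ (A *ᵥ v)) ^ 2 - (v ⬝ᵥ (A *ᵥ v)) * (p ⬝ᵥ (A *ᵥ p) - c) =
      c * (v ⬝ᵥ (A *ᵥ v)) - (p ⨯₃ v) ⬝ᵥ (A.adjugate *ᵥ (p ⨯₃ v)) := by
  rw [cross_dotProduct_adjugate_mulVec_cross, ← hA.dotProduct_mulVec_comm]
  ring

theorem adjugate_sq_det_smul_inv {K : Type*} [Field K] (Q : Matrix (Fin 3) (Fin 3) K)
    (hQ : Q.det ≠ 0) : ((Q.det • Q⁻¹) ^ 2).adjugate = Q.det ^ 2 • Q ^ 2 := by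
  rw [Q.det_smul_inv_eq_adjugate hQ.isUnit, ← adjugate_pow, adjugate_adjugate _ (by simp),
    det_pow, Fintype.card_fin, show 3 - 2 = 1 from rfl, pow_one]

theorem IsSymm.sq_dotProduct_det_smul_inv_sq_mulVec_sub_eq {K : Type*} [Field K]
    {Q : Matrix (Fin 3) (Fin 3) K} (hQ : Q.IsSymm) (p v : Fin 3 → K) :
    (p ⬝ᵥ ((Q.det • Q⁻¹) ^ 2 *ᵥ v)) ^ 2 -
        (v ⬝ᵥ ((Q.det • Q⁻¹) ^ 2 *ᵥ v)) * (p ⬝ᵥ ((Q.det • Q⁻¹) ^ 2 *ᵥ p) - Q.det ^ 2) =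
      (v ⬝ᵥ ((Q.det • Q⁻¹) ^ 2 *ᵥ v) - (p ⨯₃ v) ⬝ᵥ (Q ^ 2 *ᵥ (p ⨯₃ v))) * Q.det ^ 2 := by
  rcases eq_or_ne Q.det 0 with hdet | hdet
  · simp [hdet]
  have hsymm : ((Q.det • Q⁻¹) ^ 2).IsSymm := (hQ.inv.smul _).pow 2
  rw [hsymm.sq_dotProduct_mulVec_sub_eq, adjugate_sq_det_smul_inv Q hdet, smul_mulVec,
    dotProduct_smul, smul_eq_mul]
  ring

end Matrix

theorem ellipsoid_discriminant_identity_general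
    (r : Fin 3 → ℝ) (p' v' : Fin 3 → ℝ) :
    let Q₀ : Matrix (Fin 3) (Fin 3) ℝ := Matrix.diagonal r
    let Q₁ : Matrix (Fin 3) (Fin 3) ℝ := Q₀.det • Q₀⁻¹
    let w' : Fin 3 → ℝ := p' ⨯₃ v'
    (p' ⬝ᵥ ((Q₁ ^ 2) *ᵥ v')) ^ 2 -
        (v' ⬝ᵥ ((Q₁ ^ 2) *ᵥ v')) * (p' ⬝ᵥ ((Q₁ ^ 2) *ᵥ p') - Q₀.det ^ 2) =
      (v' ⬝ᵥ ((Q₁ ^ 2) *ᵥ v') - w' ⬝ᵥ ((Q₀ ^ 2) *ᵥ w')) * Q₀.det ^ 2 :=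
  (isSymm_diagonal r).sq_dotProduct_det_smul_inv_sq_mulVec_sub_eq p' v'

/-- Discriminant identity for the ellipsoid SDDF quadratic: with `Q₀ = diag r`,
`Q₁ = det Q₀ • Q₀⁻¹` and `w' = p' ×₃ v'`,
`(p'ᵀQ₁²v')² - (v'ᵀQ₁²v')(p'ᵀQ₁²p' - (det Q₀)²) = (v'ᵀQ₁²v' - w'ᵀQ₀²w')·(det Q₀)²`. -/
theorem ellipsoid_discriminant_identity
    (r : Fin 3 → ℝ) (hr : ∀ i, 0 < r i) (p' v' : Fin 3 → ℝ) :
    let Q₀ : Matrix (Fin 3) (Fin 3) ℝ := Matrix.diagonal r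
    let Q₁ : Matrix (Fin 3) (Fin 3) ℝ := Q₀.det • Q₀⁻¹
    let w' : Fin 3 → ℝ := p' ⨯₃ v'
    (p' ⬝ᵥ ((Q₁ ^ 2) *ᵥ v')) ^ 2 -
        (v' ⬝ᵥ ((Q₁ ^ 2) *ᵥ v')) * (p' ⬝ᵥ ((Q₁ ^ 2) *ᵥ p') - Q₀.det ^ 2) =
      (v' ⬝ᵥ ((Q₁ ^ 2) *ᵥ v') - w' ⬝ᵥ ((Q₀ ^ 2) *ᵥ w')) * Q₀.det ^ 2 :=
  ellipsoid_discriminant_identity_general r p' v'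
end

section
/- Let f(p,v) be the SDDF of an ellipsoid given in the ellipsoid local frame by f = −(det(Q₀)√(i+ε) + t₂)/t₀ with t₀ = v'^T Q₁² v', t₂ = p'^T Q₁² v', i = t₀ − w'^T Q₀² w', w' = p'×v', p' the local position and v' the local unit direction. Then v'^T ∇_{p'} f(p',v') = −1, i.e., the ellipsoid SDDF prior satisfies the directional Eikonal equation. -/
open Matrix
open scoped Matrix

/-! Translating `p'` along `v'` leaves `w' = p' × v'`, hence `i`, unchanged, while `t₂` grows at
rate `t₀`; so `f` decreases with unit slope along the line `p' + t v'`. Where `i + ε > 0` the square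
root is smooth, so this slope is `∇_{p'} f · v'`. -/

section
variable {𝕜 E : Type*} [NontriviallyNormedField 𝕜] [NormedAddCommGroup E] [NormedSpace 𝕜 E]

@[fun_prop]
theorem Differentiable.dotProduct {ι : Type*} [Fintype ι] {f g : E → ι → 𝕜}
    (hf : Differentiable 𝕜 f) (hg : Differentiable 𝕜 g) : Differentiable 𝕜 fun x => f x ⬝ᵥ g x := by
  unfold _root_.dotProduct
  fun_prop

@[fun_prop]
theorem Differentiable.mulVec {ι κ : Type*} [Fintype κ] (M : Matrix ι κ 𝕜) {f : E → κ → 𝕜}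
    (hf : Differentiable 𝕜 f) : Differentiable 𝕜 fun x => M *ᵥ f x := by
  unfold Matrix.mulVec
  fun_prop

@[fun_prop]
theorem Differentiable.cross {f g : E → Fin 3 → 𝕜} (hf : Differentiable 𝕜 f)
    (hg : Differentiable 𝕜 g) : Differentiable 𝕜 fun x => f x ⨯₃ g x := by
  refine differentiable_pi.2 fun i => ?_
  fin_cases i <;>
    simp only [Fin.zero_eta, Fin.mk_one, Fin.reduceFinMk, Fin.isValue, cross_apply, cons_val_zero,
      cons_val_one, cons_val] <;>
    fun_prop

theorem fderiv_apply_eq_of_add_smul {G : Type*} [NormedAddCommGroup G] [NormedSpace 𝕜 G]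
    {f : E → G} {x v : E} {c : G}
    (hf : DifferentiableAt 𝕜 f x) (hline : ∀ t : 𝕜, f (x + t • v) = f x + t • c) :
    fderiv 𝕜 f x v = c := by
  rw [← hf.lineDeriv_eq_fderiv]
  refine HasLineDerivAt.lineDeriv ?_
  simpa only [HasLineDerivAt, hline, one_smul] using
    ((hasDerivAt_id' (0 : 𝕜)).smul_const c).const_add (f x)

end

theorem add_smul_cross_self {R : Type*} [CommRing R] (p v : Fin 3 → R) (t : R) :
    (p + t • v) ⨯₃ v = p ⨯₃ v := by
  rw [map_add, map_smul, LinearMap.add_apply, LinearMap.smul_apply, cross_self, smul_zero, add_zero]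

theorem ellipsoid_prior_eikonal_general
    (r : Fin 3 → ℝ) (ε : ℝ) (p' v' : Fin 3 → ℝ) :
    let Q₀ : Matrix (Fin 3) (Fin 3) ℝ := Matrix.diagonal r
    let Q₁ : Matrix (Fin 3) (Fin 3) ℝ := Q₀.det • Q₀⁻¹
    let t₀ : ℝ := v' ⬝ᵥ ((Q₁ ^ 2) *ᵥ v')
    let ind : (Fin 3 → ℝ) → ℝ := fun q =>
      t₀ - (q ⨯₃ v') ⬝ᵥ ((Q₀ ^ 2) *ᵥ (q ⨯₃ v'))
    let F : (Fin 3 → ℝ) → ℝ := fun q =>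
      -(Q₀.det * Real.sqrt (ind q + ε) + q ⬝ᵥ ((Q₁ ^ 2) *ᵥ v')) / t₀
    t₀ ≠ 0 → 0 < ind p' + ε → fderiv ℝ F p' v' = -1 := by
  intro Q₀ Q₁ t₀ ind F ht₀ hind
  have hF : DifferentiableAt ℝ F p' := by
    have hrad : DifferentiableAt ℝ (fun q => ind q + ε) p' := by fun_prop
    have hsqrt := hrad.sqrt hind.ne'
    fun_prop
  refine fderiv_apply_eq_of_add_smul hF fun t => ?_
  have hind_line : ind (p' + t • v') = ind p' := by simp only [ind, add_smul_cross_self]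
  have ht₂_line : (p' + t • v') ⬝ᵥ ((Q₁ ^ 2) *ᵥ v') = p' ⬝ᵥ ((Q₁ ^ 2) *ᵥ v') + t * t₀ := by
    rw [add_dotProduct, smul_dotProduct, smul_eq_mul]
  simp only [F, hind_line, ht₂_line]
  field_simp
  ring

/-- The ellipsoid SDDF prior `f = -(det Q₀ · √(i+ε) + t₂)/t₀` (in the ellipsoid local frame)
satisfies the directional Eikonal equation `v'ᵀ ∇_{p'} f = -1`. -/
theorem ellipsoid_prior_eikonal
    (r : Fin 3 → ℝ) (hr : ∀ i, 0 < r i) (ε : ℝ) (hε : 0 ≤ ε)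
    (p' v' : Fin 3 → ℝ) (hv' : v' ⬝ᵥ v' = 1) :
    let Q₀ : Matrix (Fin 3) (Fin 3) ℝ := Matrix.diagonal r
    let Q₁ : Matrix (Fin 3) (Fin 3) ℝ := Q₀.det • Q₀⁻¹
    let t₀ : ℝ := v' ⬝ᵥ ((Q₁ ^ 2) *ᵥ v')
    let ind : (Fin 3 → ℝ) → ℝ := fun q =>
      t₀ - (q ⨯₃ v') ⬝ᵥ ((Q₀ ^ 2) *ᵥ (q ⨯₃ v'))
    let F : (Fin 3 → ℝ) → ℝ := fun q =>
      -(Q₀.det * Real.sqrt (ind q + ε) + q ⬝ᵥ ((Q₁ ^ 2) *ᵥ v')) / t₀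
    t₀ ≠ 0 → 0 < ind p' + ε → fderiv ℝ F p' v' = -1 :=
  ellipsoid_prior_eikonal_general r ε p' v'
end

section
/- Let f(p',v') satisfy the directional Eikonal equation v'^T ∇_{p'} f = −1, let q = p' + f(p',v') v' be the predicted intersection point, and let δ_f(p',v') = g(q, v') for any differentiable function g : ℝ³ × ℝ³ → ℝ. Then v'^T ∇_{p'} δ_f = 0, and hence the corrected prediction f̂ = f + δ_f also satisfies v'^T ∇_{p'} f̂ = −1. -/
open Matrix
open scoped Matrix

/-! Along the ray `t ↦ p + t • v'` the predicted hit point `q = p + f p • v'` does not move: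
the ray advances at unit speed while the eikonal equation makes the predicted distance `f`
shrink at unit speed. Hence `q`, and with it every residual `g (q ·) v'`, has zero derivative
in the direction `v'`, and adding the residual to `f` does not change its directional
derivative. -/

section

variable {𝕜 E F : Type*} [NontriviallyNormedField 𝕜]
  [NormedAddCommGroup E] [NormedSpace 𝕜 E] [NormedAddCommGroup F] [NormedSpace 𝕜 F]

theorem fderiv_add_smul_apply_eq_zero {f : E → 𝕜} {p v : E} (hf : DifferentiableAt 𝕜 f p)
    (hEik : fderiv 𝕜 f p v = -1) :
    fderiv 𝕜 (fun q => q + f q • v) p v = 0 := by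
  have hq : HasFDerivAt (fun q => q + f q • v)
      (ContinuousLinearMap.id 𝕜 E + (fderiv 𝕜 f p).smulRight v) p :=
    (hasFDerivAt_id p).add (hf.hasFDerivAt.smul_const v)
  simp [hq.fderiv, hEik]

theorem fderiv_comp_apply_eq_zero {φ : E → E} {h : E → F} {p v : E}
    (hh : DifferentiableAt 𝕜 h (φ p)) (hφ : DifferentiableAt 𝕜 φ p)
    (hφv : fderiv 𝕜 φ p v = 0) :
    fderiv 𝕜 (h ∘ φ) p v = 0 := by
  rw [fderiv_comp p hh hφ, ContinuousLinearMap.comp_apply, hφv, map_zero]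

end

theorem residual_preserves_eikonal_general
    (v' : Fin 3 → ℝ)
    (f : (Fin 3 → ℝ) → ℝ) (hf : Differentiable ℝ f)
    (hEik : ∀ p : Fin 3 → ℝ, fderiv ℝ f p v' = -1)
    (g : (Fin 3 → ℝ) → (Fin 3 → ℝ) → ℝ)
    (hg : Differentiable ℝ fun x => g x v') :
    (∀ p : Fin 3 → ℝ, fderiv ℝ (fun q => g (q + f q • v') v') p v' = 0) ∧
    (∀ p : Fin 3 → ℝ,
      fderiv ℝ (fun q => f q + g (q + f q • v') v') p v' = -1) := by
  have hq : Differentiable ℝ fun q : Fin 3 → ℝ => q + f q • v' :=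
    differentiable_id.add (hf.smul_const v')
  have hResidual : ∀ p, fderiv ℝ (fun q => g (q + f q • v') v') p v' = 0 := fun p =>
    fderiv_comp_apply_eq_zero (φ := fun q => q + f q • v') (h := fun x => g x v')
      (hg _) (hq p) (fderiv_add_smul_apply_eq_zero (hf p) (hEik p))
  refine ⟨hResidual, fun p => ?_⟩
  have hδ : DifferentiableAt ℝ (fun q => g (q + f q • v') v') p := (hg _).comp p (hq p)
  rw [fderiv_fun_add (hf p) hδ, _root_.add_apply, hEik p, hResidual p, add_zero]

/-- Residual correction preserves the directional Eikonal equation: if `f` satisfies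
`v'ᵀ∇f = -1` everywhere, `q(p') = p' + f(p') • v'` and `δ_f(p') = g (q p') v'` for a
differentiable `g`, then `v'ᵀ∇δ_f = 0` and `f̂ = f + δ_f` satisfies `v'ᵀ∇f̂ = -1`. -/
theorem residual_preserves_eikonal
    (v' : Fin 3 → ℝ) (hv' : v' ⬝ᵥ v' = 1)
    (f : (Fin 3 → ℝ) → ℝ) (hf : Differentiable ℝ f)
    (hEik : ∀ p : Fin 3 → ℝ, fderiv ℝ f p v' = -1)
    (g : (Fin 3 → ℝ) → (Fin 3 → ℝ) → ℝ)
    (hg : Differentiable ℝ fun x => g x v') :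
    (∀ p : Fin 3 → ℝ, fderiv ℝ (fun q => g (q + f q • v') v') p v' = 0) ∧
    (∀ p : Fin 3 → ℝ,
      fderiv ℝ (fun q => f q + g (q + f q • v') v') p v' = -1) :=
  residual_preserves_eikonal_general v' f hf hEik g hg
end
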